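/- Let E = ((N_t, q_t))_{t∈[m]} ∈ E_{n,m,q} be a nested request sequence (N_1 ⊇ ⋯ ⊇ N_m) whose offline nodes are labeled so that their latest arriving online neighbors μ_i = max(Γ_i(E) ∪ {0}) satisfy μ_1 ≤ μ_2 ≤ ⋯ ≤ μ_n. Define z ∈ ℝ^n_{≥0} by z(i) = Σ_{t ∈ Γ_i(E) \ Γ_{i−1}(E)} q_t, where Γ_0(E) = ∅. Then the water-filling allocation satisfies WF(E) = Hz, where H ∈ ℝ^{n×n} is the matrix H(i,j) = 1{i ≥ j}/(n − j + 1). -/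

import Mathlib

open Finset MeasureTheory

/-- A request sequence with `n` offline nodes and `m` online nodes: each online
node `t` has a nonempty neighborhood `N t ⊆ [n]` and a positive quantity `q t`. -/
structure ReqSeq (n m : ℕ) where
  N : Fin m → Finset (Fin n)
  q : Fin m → ℝ
  N_nonempty : ∀ t, (N t).Nonempty
  q_pos : ∀ t, 0 < q t

/-- `Δ(N, q)`: feasible allocations for a single online node. -/
def allocSet (n : ℕ) (N : Finset (Fin n)) (qt : ℝ) : Set (Fin n → ℝ) :=
  {x | (∀ i, 0 ≤ x i) ∧ (∀ i, i ∉ N → x i = 0) ∧ ∑ i, x i = qt}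

/-- A feasible allocation trajectory on a request sequence. -/
def Feasible {n m : ℕ} (E : ReqSeq n m) (x : Fin m → Fin n → ℝ) : Prop :=
  ∀ t, x t ∈ allocSet n (E.N t) (E.q t)

/-- `Δ(E)`: the Minkowski sum of the per-node allocation sets (feasible load vectors). -/
def loads {n m : ℕ} (E : ReqSeq n m) : Set (Fin n → ℝ) :=
  {ℓ | ∃ x, Feasible E x ∧ ℓ = ∑ t, x t}

/-- Sum of the `k` largest entries of `x`. -/
noncomputable def topSum {n : ℕ} (x : Fin n → ℝ) (k : ℕ) : ℝ :=
  sSup ((fun s : Finset (Fin n) => ∑ i ∈ s, x i) '' {s | s.card = k})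

/-- `Majorizes x y` means `x ⪰ y`: equal total sums and every `k`-largest-entries
sum of `x` dominates that of `y`. -/
def Majorizes {n : ℕ} (x y : Fin n → ℝ) : Prop :=
  (∑ i, x i = ∑ i, y i) ∧ ∀ k ≤ n, topSum y k ≤ topSum x k

/-- `f` is Schur-concave on the nonnegative orthant: `x ⪯ y → f x ≥ f y`. -/
def SchurConcave {n : ℕ} (f : (Fin n → ℝ) → ℝ) : Prop :=
  ∀ x y : Fin n → ℝ, (∀ i, 0 ≤ x i) → (∀ i, 0 ≤ y i) → Majorizes y x → f y ≤ f x

/-- `g` is Schur-convex on the nonnegative orthant: `x ⪯ y → g x ≤ g y`. -/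
def SchurConvex {n : ℕ} (g : (Fin n → ℝ) → ℝ) : Prop :=
  ∀ x y : Fin n → ℝ, (∀ i, 0 ≤ x i) → (∀ i, 0 ≤ y i) → Majorizes y x → g x ≤ g y

/-- Cumulative load strictly before online node `t`. -/
def prevLoad {n m : ℕ} (x : Fin m → Fin n → ℝ) (t : Fin m) : Fin n → ℝ :=
  fun i => ∑ s ∈ Finset.univ.filter (fun s => s < t), x s i

/-- Minimum of `v` over the neighborhood of online node `t`. -/
noncomputable def minOnNbr {n m : ℕ} (E : ReqSeq n m) (t : Fin m) (v : Fin n → ℝ) : ℝ :=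
  (E.N t).inf' (E.N_nonempty t) v

/-- `x` is the water-filling allocation trajectory on `E`: at each arrival `t`,
`x t` maximizes the minimum post-allocation load over `N t`. -/
def IsWFAlloc {n m : ℕ} (E : ReqSeq n m) (x : Fin m → Fin n → ℝ) : Prop :=
  Feasible E x ∧
  ∀ t, ∀ y ∈ allocSet n (E.N t) (E.q t),
    minOnNbr E t (fun i => y i + prevLoad x t i) ≤ minOnNbr E t (fun i => x t i + prevLoad x t i)

-- The load vector produced by water-filling (via choice; the trajectory exists and is unique).
open Classical in
noncomputable def wfLoad {n m : ℕ} (E : ReqSeq n m) : Fin n → ℝ :=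
  if h : ∃ x, IsWFAlloc E x then ∑ t, h.choose t else 0

/-- `ℓ` is the majorization-minimal element of `Δ(E)`. -/
def IsOpt {n m : ℕ} (E : ReqSeq n m) (ℓ : Fin n → ℝ) : Prop :=
  ℓ ∈ loads E ∧ ∀ ℓ' ∈ loads E, Majorizes ℓ' ℓ

-- `OPT(E)`, the majorization-minimal feasible load vector (via choice).
open Classical in
noncomputable def optLoad {n m : ℕ} (E : ReqSeq n m) : Fin n → ℝ :=
  if h : ∃ ℓ, IsOpt E ℓ then h.choose else 0

/-- A request sequence is nested if `N 1 ⊇ N 2 ⊇ ⋯ ⊇ N m`. -/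
def IsNested {n m : ℕ} (E : ReqSeq n m) : Prop :=
  ∀ s t : Fin m, s ≤ t → E.N t ⊆ E.N s

/-- `E_{n,m,q}`: request sequences with total quantity `q`. -/
def seqs (n m : ℕ) (q : ℝ) : Set (ReqSeq n m) := {E | ∑ t, E.q t = q}

/-- The harmonic-series matrix applied to a vector: `(Hℓ)(i) = Σ_{j ≤ i} ℓ(j)/(n − j + 1)`
(in 1-indexed notation). -/
noncomputable def Hvec (n : ℕ) (ℓ : Fin n → ℝ) : Fin n → ℝ :=
  fun i => ∑ j ∈ Finset.univ.filter (fun j => j ≤ i), ℓ j / ((n - (j : ℕ) : ℕ) : ℝ)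

/-- The water-filling height of online node `t`: the common post-allocation load of
the offline nodes in the support of `x t`. -/
noncomputable def height {n m : ℕ} (x : Fin m → Fin n → ℝ) (t : Fin m) : ℝ :=
  sSup {c | ∃ i, 0 < x t i ∧ c = x t i + prevLoad x t i}


/-- `μ_i = max(Γ_i(E) ∪ {0})`: the (1-indexed) latest arriving online neighbor of
offline node `i` (0 if `i` has no neighbor). -/
def lastNbr {n m : ℕ} (E : ReqSeq n m) (i : Fin n) : ℕ :=
  (Finset.univ.filter (fun t => i ∈ E.N t)).sup (fun t => (t : ℕ) + 1)

/-- `z(i) = Σ_{t ∈ Γ_i(E) \ Γ_{i−1}(E)} q_t`, with `Γ_0(E) = ∅` (here the predecessor of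
offline node `i` is the node `j` with `j + 1 = i`, if any). -/
noncomputable def zvec {n m : ℕ} (E : ReqSeq n m) : Fin n → ℝ :=
  fun i => ∑ t, if i ∈ E.N t ∧ ¬ ∃ j : Fin n, (j : ℕ) + 1 = (i : ℕ) ∧ j ∈ E.N t
    then E.q t else 0

/-!
On a nested sequence every neighborhood `N t` lies inside all earlier ones, so, by induction
on `t`, the load accumulated before `t` is level on `N t`; water-filling then splits `q t`
uniformly over `N t`. When `μ` is sorted, `N t` is the suffix `{a_t, …, n}` of its least
element `a_t`, and `z` puts the mass `q t` exactly at `a_t`. Since column `a` of `H` is the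
uniform distribution on `{a, …, n}`, `WF(E) = Σ_t q_t · H e_{a_t} = Hz`.
-/

section WaterFillingTransform

variable {n m : ℕ}

noncomputable def uniformSplit (N : Finset (Fin n)) (c : ℝ) (i : Fin n) : ℝ :=
  if i ∈ N then c / #N else 0

lemma uniformSplit_mem_allocSet {N : Finset (Fin n)} (hN : N.Nonempty) {c : ℝ} (hc : 0 ≤ c) :
    uniformSplit N c ∈ allocSet n N c := by
  refine ⟨fun i => ?_, fun i hi => if_neg hi, ?_⟩
  · unfold uniformSplit
    split_ifs <;> positivity
  · simp only [uniformSplit]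
    rw [sum_ite_mem, univ_inter, sum_const, nsmul_eq_mul,
      mul_div_cancel₀ _ (by exact_mod_cast hN.card_pos.ne')]

lemma eq_uniformSplit_of_forall_le {N : Finset (Fin n)} (hN : N.Nonempty) {c : ℝ}
    {x : Fin n → ℝ} (hx : x ∈ allocSet n N c) (hle : ∀ i ∈ N, c / #N ≤ x i) :
    x = uniformSplit N c := by
  obtain ⟨-, hout, hsum⟩ := hx
  have hsumN : ∑ i ∈ N, c / #N = ∑ i ∈ N, x i := by
    rw [sum_const, nsmul_eq_mul, mul_div_cancel₀ _ (by exact_mod_cast hN.card_pos.ne'),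
      ← hsum, sum_subset (subset_univ N) fun i _ hi => hout i hi]
  have heq := (sum_eq_sum_iff_of_le hle).mp hsumN
  funext i
  by_cases hi : i ∈ N
  · rw [uniformSplit, if_pos hi, heq i hi]
  · rw [uniformSplit, if_neg hi, hout i hi]

lemma eq_uniformSplit_of_isMaxMin {N : Finset (Fin n)} (hN : N.Nonempty) {c C : ℝ}
    (hc : 0 ≤ c) {x v : Fin n → ℝ} (hx : x ∈ allocSet n N c) (hv : ∀ i ∈ N, v i = C)
    (hmax : ∀ y ∈ allocSet n N c,
      N.inf' hN (fun i => y i + v i) ≤ N.inf' hN (fun i => x i + v i)) :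
    x = uniformSplit N c := by
  refine eq_uniformSplit_of_forall_le hN hx fun i hi => ?_
  have hunif : N.inf' hN (fun j => uniformSplit N c j + v j) = c / #N + C := by
    rw [inf'_congr hN rfl fun j hj => by rw [uniformSplit, if_pos hj, hv j hj]]
    exact inf'_const hN _
  have hle := (hmax _ (uniformSplit_mem_allocSet hN hc)).trans (inf'_le _ hi)
  rw [hunif, hv i hi] at hle
  linarith

lemma prevLoad_eq_of_isNested {E : ReqSeq n m} (hnest : IsNested E) {x : Fin m → Fin n → ℝ}
    {t : Fin m} (hprev : ∀ s < t, x s = uniformSplit (E.N s) (E.q s)) {i : Fin n}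
    (hi : i ∈ E.N t) :
    prevLoad x t i = ∑ s ∈ univ.filter (· < t), E.q s / #(E.N s) :=
  sum_congr rfl fun s hs => by
    have hst := (mem_filter.mp hs).2
    rw [hprev s hst, uniformSplit, if_pos (hnest s t hst.le hi)]

theorem IsWFAlloc.eq_uniformSplit {E : ReqSeq n m} (hnest : IsNested E)
    {x : Fin m → Fin n → ℝ} (hx : IsWFAlloc E x) (t : Fin m) :
    x t = uniformSplit (E.N t) (E.q t) := by
  induction t using WellFoundedLT.induction with
  | _ t ih =>
    exact eq_uniformSplit_of_isMaxMin (E.N_nonempty t) (E.q_pos t).le (hx.1 t)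
      (fun i hi => prevLoad_eq_of_isNested hnest ih hi) (hx.2 t)

lemma mem_N_iff_lt_lastNbr {E : ReqSeq n m} (hnest : IsNested E) (t : Fin m) (i : Fin n) :
    i ∈ E.N t ↔ (t : ℕ) < lastNbr E i := by
  constructor
  · intro h
    have : (t : ℕ) + 1 ≤ lastNbr E i :=
      le_sup (f := fun s : Fin m => (s : ℕ) + 1) (by simp [h])
    omega
  · intro h
    obtain ⟨s, hs, hts⟩ := Finset.lt_sup_iff.mp h
    exact hnest t s (Fin.le_def.mpr (by omega)) (mem_filter.mp hs).2

def firstNbr (E : ReqSeq n m) (t : Fin m) : Fin n :=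
  (E.N t).min' (E.N_nonempty t)

lemma N_eq_Ici_firstNbr {E : ReqSeq n m} (hnest : IsNested E) (hsorted : Monotone (lastNbr E))
    (t : Fin m) : E.N t = Ici (firstNbr E t) := by
  have hfirst := (mem_N_iff_lt_lastNbr hnest t _).mp ((E.N t).min'_mem (E.N_nonempty t))
  ext j
  rw [mem_Ici]
  refine ⟨fun hj => min'_le _ _ hj, fun hj => ?_⟩
  exact (mem_N_iff_lt_lastNbr hnest t j).mpr (hfirst.trans_le (hsorted hj))

lemma mem_Ici_and_no_pred_mem_Ici_iff {a j : Fin n} :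
    (j ∈ Ici a ∧ ¬∃ k : Fin n, (k : ℕ) + 1 = j ∧ k ∈ Ici a) ↔ j = a := by
  simp only [mem_Ici, Fin.le_def]
  constructor
  · rintro ⟨haj, hpred⟩
    by_contra hne
    have hlt : (a : ℕ) < j := lt_of_le_of_ne haj fun h => hne (Fin.ext h.symm)
    exact hpred ⟨⟨j - 1, by omega⟩, by simp only; omega, by simp only; omega⟩
  · rintro rfl
    exact ⟨le_rfl, fun ⟨k, hk, hak⟩ => by omega⟩

lemma zvec_eq_sum_single {E : ReqSeq n m} (hnest : IsNested E)
    (hsorted : Monotone (lastNbr E)) :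
    zvec E = ∑ t, Pi.single (firstNbr E t) (E.q t) := by
  funext j
  simp only [zvec, Finset.sum_apply, Pi.single_apply]
  refine sum_congr rfl fun t _ => ?_
  simp only [N_eq_Ici_firstNbr hnest hsorted t, mem_Ici_and_no_pred_mem_Ici_iff]

lemma Hvec_sum {ι : Type*} (s : Finset ι) (f : ι → Fin n → ℝ) :
    Hvec n (∑ t ∈ s, f t) = ∑ t ∈ s, Hvec n (f t) := by
  funext i
  simp only [Hvec, Finset.sum_apply, sum_div]
  exact sum_comm

lemma Hvec_single (a : Fin n) (c : ℝ) : Hvec n (Pi.single a c) = uniformSplit (Ici a) c := by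
  funext i
  simp only [Hvec, uniformSplit, mem_Ici, Fin.card_Ici, Pi.single_apply, ite_div, zero_div]
  rw [sum_ite_eq']
  simp only [mem_filter, mem_univ, true_and]

end WaterFillingTransform

/-- **Observation (Water-filling Transform H).** For a nested sequence `E` whose offline
nodes are labeled so that `μ_1 ≤ ⋯ ≤ μ_n`, the water-filling allocation satisfies
`WF(E) = Hz`. -/
theorem wf_transform_H (n m : ℕ) (E : ReqSeq n m) (hnest : IsNested E)
    (hsorted : Monotone (lastNbr E))
    (x : Fin m → Fin n → ℝ) (hx : IsWFAlloc E x) :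
    ∑ t, x t = Hvec n (zvec E) :=
  calc ∑ t, x t = ∑ t, uniformSplit (E.N t) (E.q t) :=
        sum_congr rfl fun t _ => hx.eq_uniformSplit hnest t
    _ = ∑ t, Hvec n (Pi.single (firstNbr E t) (E.q t)) :=
        sum_congr rfl fun t _ => by rw [Hvec_single, ← N_eq_Ici_firstNbr hnest hsorted]
    _ = Hvec n (zvec E) := by rw [zvec_eq_sum_single hnest hsorted, Hvec_sum]
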